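/- Define ℓ(ζ) := 18 + α² + αγ - (20 - βγ - 2αβ)·cos ζ - (25 - β²)·cos²ζ + 24·sin ζ, with α = 5/2 - 43/(2√41), β = 9/2 - 13/(2√41), γ = 2 + 28/√41. Then ℓ(ζ) > 0 for all ζ ∈ [π/2, π]; ℓ is strictly increasing on [0, π/2]; and ℓ(0) < 0 < ℓ(π/2), so ℓ has a unique zero in [0, π]. -/

import Mathlib

noncomputable def α : ℝ := 5/2 - 43/(2*Real.sqrt 41)
noncomputable def β : ℝ := 9/2 - 13/(2*Real.sqrt 41)
noncomputable def γ : ℝ := 2 + 28/Real.sqrt 41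

noncomputable def ℓ (ζ : ℝ) : ℝ :=
  18 + α^2 + α*γ - (20 - β*γ - 2*α*β)*Real.cos ζ
    - (25 - β^2)*Real.cos ζ^2 + 24*Real.sin ζ

/-!
Write `ℓ ζ = C - A cos ζ - B cos² ζ + 24 sin ζ`. In closed form `A, B > 0` and `B < C`.
On `[π/2, π]` we have `cos ζ ≤ 0`, `cos² ζ ≤ 1` and `sin ζ ≥ 0`, so `ℓ ζ ≥ C - B > 0`.
On `[0, π/2]` the functions `-cos`, `-cos²` and `sin` are increasing, `sin` strictly, so `ℓ`
is strictly increasing there. Since `ℓ 0 = C - A - B < 0`, the intermediate value theorem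
gives a zero in `[0, π/2]`, and it is the only one in `[0, π]`.
-/

open Real Set

theorem existsUnique_eq_of_strictMonoOn_of_lt {X : Type*} [ConditionallyCompleteLinearOrder X]
    [TopologicalSpace X] [OrderTopology X] [DenselyOrdered X] {f : X → ℝ} {a b c : X} {y : ℝ}
    (hab : a ≤ b) (hbc : b ≤ c) (hf : ContinuousOn f (Icc a b))
    (hmono : StrictMonoOn f (Icc a b)) (ha : f a < y) (hgt : ∀ x ∈ Icc b c, y < f x) :
    ∃! x, x ∈ Icc a c ∧ f x = y := by
  have hb : y < f b := hgt b ⟨le_rfl, hbc⟩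
  obtain ⟨z, hz, hfz⟩ := intermediate_value_Icc hab hf ⟨ha.le, hb.le⟩
  have below_b : ∀ x ∈ Icc a c, f x = y → x ∈ Icc a b := fun x hx hfx =>
    ⟨hx.1, le_of_not_gt fun hbx => (hgt x ⟨hbx.le, hx.2⟩).ne' hfx⟩
  refine ⟨z, ⟨⟨hz.1, hz.2.trans hbc⟩, hfz⟩, fun x ⟨hx, hfx⟩ => ?_⟩
  exact hmono.injOn (below_b x hx hfx) hz (hfx.trans hfz.symm)

noncomputable def quadCosAddSin (A B C D ζ : ℝ) : ℝ :=
  C - A * cos ζ - B * cos ζ ^ 2 + D * sin ζ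

section quadCosAddSin

variable {A B C D : ℝ}

theorem continuous_quadCosAddSin : Continuous (quadCosAddSin A B C D) := by
  unfold quadCosAddSin
  fun_prop

theorem quadCosAddSin_pos (hA : 0 ≤ A) (hB : 0 ≤ B) (hBC : B < C) (hD : 0 ≤ D) {ζ : ℝ}
    (hζ : ζ ∈ Icc (π / 2) π) : 0 < quadCosAddSin A B C D ζ := by
  have hcos : cos ζ ≤ 0 := cos_nonpos_of_pi_div_two_le_of_le hζ.1 (by linarith [pi_pos, hζ.2])
  have hsin : 0 ≤ sin ζ := sin_nonneg_of_nonneg_of_le_pi (by linarith [pi_pos, hζ.1]) hζ.2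
  have hcos_sq : cos ζ ^ 2 ≤ 1 := cos_sq_le_one ζ
  unfold quadCosAddSin
  linarith [mul_nonpos_of_nonneg_of_nonpos hA hcos, mul_le_mul_of_nonneg_left hcos_sq hB,
    mul_nonneg hD hsin]

theorem strictMonoOn_quadCosAddSin (hA : 0 ≤ A) (hB : 0 ≤ B) (hD : 0 < D) :
    StrictMonoOn (quadCosAddSin A B C D) (Icc 0 (π / 2)) := by
  intro x hx y hy hxy
  have hcos : cos y ≤ cos x :=
    cos_le_cos_of_nonneg_of_le_pi hx.1 (by linarith [pi_pos, hy.2]) hxy.le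
  have hcos_sq : cos y ^ 2 ≤ cos x ^ 2 :=
    pow_le_pow_left₀ (cos_nonneg_of_mem_Icc ⟨by linarith [pi_pos, hy.1], hy.2⟩) hcos 2
  have hsin : sin x < sin y :=
    sin_lt_sin_of_lt_of_le_pi_div_two (by linarith [pi_pos, hx.1]) hy.2 hxy
  unfold quadCosAddSin
  linarith [mul_le_mul_of_nonneg_left hcos hA, mul_le_mul_of_nonneg_left hcos_sq hB,
    mul_lt_mul_of_pos_left hsin hD]

end quadCosAddSin

theorem sqrt_41_bounds : 32 / 5 < √41 ∧ √41 < 641 / 100 :=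
  ⟨(lt_sqrt (by norm_num)).2 (by norm_num), (sqrt_lt' (by norm_num)).2 (by norm_num)⟩

theorem ℓ_eq_quadCosAddSin :
    ℓ = quadCosAddSin ((113 * √41 - 569) / 41) ((305 + 117 * √41) / 82)
      ((2119 - 161 * √41) / 82) 24 := by
  have hs : √41 ^ 2 = 41 := sq_sqrt (by norm_num)
  have hs0 : √41 ≠ 0 := by positivity
  have hA : 20 - β * γ - 2 * α * β = (113 * √41 - 569) / 41 := by
    unfold α β γ
    field_simp
    linear_combination (195 - 226 * √41) * hs
  have hB : 25 - β ^ 2 = (305 + 117 * √41) / 82 := by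
    unfold β
    field_simp
    linear_combination (338 - 468 * √41) * hs
  have hC : 18 + α ^ 2 + α * γ = (2119 - 161 * √41) / 82 := by
    unfold α γ
    field_simp
    linear_combination (1118 + 644 * √41) * hs
  funext ζ
  rw [ℓ, quadCosAddSin, hA, hB, hC]

theorem stmt17 :
    (∀ ζ : ℝ, Real.pi/2 ≤ ζ → ζ ≤ Real.pi → 0 < ℓ ζ) ∧
    StrictMonoOn ℓ (Set.Icc 0 (Real.pi/2)) ∧
    ℓ 0 < 0 ∧ 0 < ℓ (Real.pi/2) ∧
    (∃! ζ : ℝ, ζ ∈ Set.Icc 0 Real.pi ∧ ℓ ζ = 0) := by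
  obtain ⟨hlow, hup⟩ := sqrt_41_bounds
  have hA : 0 ≤ (113 * √41 - 569) / 41 := by linarith
  have hB : 0 ≤ (305 + 117 * √41) / 82 := by positivity
  have hpos : ∀ ζ ∈ Icc (π / 2) π, 0 < ℓ ζ := fun ζ hζ => by
    rw [ℓ_eq_quadCosAddSin]
    exact quadCosAddSin_pos hA hB (by linarith) (by norm_num) hζ
  have hmono : StrictMonoOn ℓ (Icc 0 (π / 2)) := by
    rw [ℓ_eq_quadCosAddSin]
    exact strictMonoOn_quadCosAddSin hA hB (by norm_num)
  have hzero : ℓ 0 < 0 := by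
    simp only [ℓ_eq_quadCosAddSin, quadCosAddSin, cos_zero, sin_zero]
    linarith
  have hpi : π / 2 ≤ π := by linarith [pi_pos]
  refine ⟨fun ζ h₁ h₂ => hpos ζ ⟨h₁, h₂⟩, hmono, hzero, hpos _ ⟨le_rfl, hpi⟩, ?_⟩
  refine existsUnique_eq_of_strictMonoOn_of_lt (by positivity) hpi ?_ hmono hzero hpos
  rw [ℓ_eq_quadCosAddSin]
  exact continuous_quadCosAddSin.continuousOn
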